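/- arXiv:1403.6625 — 9 statements merged into one kernel-verified Lean document; each statement's English description precedes it below -/
import Mathlib

section
/- Let R := Polynomial ℝ (polynomial ring in one variable X over ℝ) and let S := {g : Fin 2 → R | g 0 − g 1 ∈ Ideal.span {X^2}}, an R-submodule of Fin 2 → R. Then the map S ⊗[R] (R ⧸ Ideal.span {X}) → (Fin 2 → R) ⊗[R] (R ⧸ Ideal.span {X}) induced by the inclusion S → (Fin 2 → R) is not injective. -/
open Polynomial TensorProduct

/-- The witness is `s ⊗ 1`: it dies in `M ⊗ R/I` because `a • 1 = 0` in `R/I`,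
but `φ ⊗ R/I` sends it to the class of `φ s`. -/
theorem Submodule.not_injective_rTensor_subtype {R M : Type*} [CommRing R] [AddCommGroup M]
    [Module R M] {S : Submodule R M} {I : Ideal R} (φ : S →ₗ[R] R) {s : S} {a : R} {m : M}
    (hs : (s : M) = a • m) (haI : a ∈ I) (hφs : φ s ∉ I) :
    ¬ Function.Injective (S.subtype.rTensor (R ⧸ I)) := by
  intro hinj
  have h_image : S.subtype.rTensor (R ⧸ I) (s ⊗ₜ 1) = 0 := by
    rw [LinearMap.rTensor_tmul, subtype_apply, hs, smul_tmul, ← Algebra.algebraMap_eq_smul_one,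
      Ideal.Quotient.algebraMap_eq, Ideal.Quotient.eq_zero_iff_mem.2 haI, tmul_zero]
  have h_zero : s ⊗ₜ[R] (1 : R ⧸ I) = 0 := hinj (h_image.trans (map_zero _).symm)
  have h_eval :
      TensorProduct.lid R (R ⧸ I) (φ.rTensor (R ⧸ I) (s ⊗ₜ 1)) = algebraMap R _ (φ s) := by
    rw [LinearMap.rTensor_tmul, lid_tmul, Algebra.algebraMap_eq_smul_one]
  rw [h_zero, map_zero, map_zero, eq_comm, Ideal.Quotient.algebraMap_eq,
    Ideal.Quotient.eq_zero_iff_mem] at h_eval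
  exact hφs h_eval

/-- Dividing `g 0 - g 1` by `a` is a functional on `S`, and it takes the value `1` at
`(a, 0) = a • (1, 0)`. -/
theorem not_injective_rTensor_subtype_of_mem_iff_sub_mem_span {R : Type*} [CommRing R]
    [IsDomain R] {a : R} (ha : a ≠ 0) {I : Ideal R} (haI : a ∈ I) (hI : I ≠ ⊤)
    (S : Submodule R (Fin 2 → R))
    (hS : ∀ g : Fin 2 → R, g ∈ S ↔ g 0 - g 1 ∈ Ideal.span {a}) :
    ¬ Function.Injective (S.subtype.rTensor (R ⧸ I)) := by
  let diff : (Fin 2 → R) →ₗ[R] R :=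
    LinearMap.proj (R := R) (φ := fun _ : Fin 2 => R) 0 - LinearMap.proj 1
  let φ : S →ₗ[R] R :=
    (LinearEquiv.coord R R a ha).toLinearMap ∘ₗ diff.restrict fun g hg => (hS g).1 hg
  have hmem : Pi.single 0 a ∈ S := (hS _).2 (by simp)
  refine S.not_injective_rTensor_subtype φ (s := ⟨_, hmem⟩) (m := Pi.single 0 1)
    (by rw [← Pi.single_smul', smul_eq_mul, mul_one]) haI ?_
  have hφ : φ ⟨_, hmem⟩ = 1 := by
    rw [← LinearEquiv.coord_self R R a ha]
    refine congrArg (LinearEquiv.coord R R a ha) (Subtype.ext ?_)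
    change (Pi.single 0 a : Fin 2 → R) 0 - (Pi.single 0 a : Fin 2 → R) 1 = a
    simp
  rwa [hφ, ← Ideal.eq_top_iff_one]

/-- For `R = ℝ[X]` and
`S = {g : Fin 2 → R | g 0 − g 1 ∈ (X²)} ⊆ Fin 2 → R`, the map
`S ⊗[R] (R ⧸ (X)) → (Fin 2 → R) ⊗[R] (R ⧸ (X))` induced by the inclusion is not injective. -/
theorem stmt_4 (S : Submodule (Polynomial ℝ) (Fin 2 → Polynomial ℝ))
    (hS : ∀ g : Fin 2 → Polynomial ℝ,
      g ∈ S ↔ g 0 - g 1 ∈ Ideal.span {(X : Polynomial ℝ) ^ 2}) :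
    ¬ Function.Injective
        (LinearMap.rTensor (Polynomial ℝ ⧸ Ideal.span {(X : Polynomial ℝ)}) S.subtype) :=
  not_injective_rTensor_subtype_of_mem_iff_sub_mem_span (pow_ne_zero 2 X_ne_zero)
    (Ideal.mem_span_singleton.2 (dvd_pow_self X two_ne_zero))
    (by rw [Ne, Ideal.span_singleton_eq_top]; exact not_isUnit_X) S hS
end

section
/- Let R := Polynomial ℝ and let S := {g : Fin 2 → R | g 0 − g 1 ∈ Ideal.span {X^2}} ⊆ (Fin 2 → R). Then: (a) S equals the R-subalgebra of the product ring Fin 2 → R (with pointwise operations, R mapping in diagonally) generated by the single element g := (−X², X²); (b) the pair {(1,1), (−X², X²)} is a basis of S as an R-module; and (c) g * g = X⁴ • (1,1), so S ≅ R[g]/(g² − X⁴) as an R-algebra. -/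
/-! If `v = s • 1 + t • (-a, a)` then `v 0 - v 1 = -2 t a`; when `2` is a unit and `a` a
non-zero-divisor, this shows that `1, (-a, a)` is a basis of the quasi-splines
`{v | a ∣ v 0 - v 1}`. Since `g = (-a, a)` satisfies `g * g = a² • 1`, the span of `1, g` is
closed under multiplication, hence is the algebra generated by `g`; and every polynomial in `g`
reduces modulo the monic `X² - a²` to one of degree `≤ 1`, which vanishes at `g` only if it is
zero by the independence of `1, g`. -/

open Polynomial

/-- The quasi-spline `g = (−X², X²)` in the product ring `Fin 2 → ℝ[X]`. -/
noncomputable def gElt : Fin 2 → Polynomial ℝ := ![-(X ^ 2), X ^ 2]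


section QuadraticElement

variable {R A : Type*} [CommRing R] [Ring A] [Algebra R A] {g : A} {c : R}

theorem toSubmodule_adjoin_singleton_eq_span_pair (hg : g * g = c • 1) :
    Subalgebra.toSubmodule (Algebra.adjoin R {g}) = Submodule.span R {1, g} := by
  refine le_antisymm ?_ (Submodule.span_le.2 ?_)
  · refine Algebra.adjoin_le (S := (Submodule.span R {1, g}).toSubalgebra
      (Submodule.subset_span (by simp)) fun x y hx hy => ?_)
      (Set.singleton_subset_iff.2 (Submodule.subset_span (by simp)))
    obtain ⟨a, b, rfl⟩ := Submodule.mem_span_pair.1 hx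
    obtain ⟨a', b', rfl⟩ := Submodule.mem_span_pair.1 hy
    refine Submodule.mem_span_pair.2 ⟨a * a' + b * b' * c, a * b' + b * a', ?_⟩
    simp only [add_mul, mul_add, smul_mul_smul_comm, one_mul, mul_one, hg, add_smul, mul_smul]
    abel
  · simp [Set.insert_subset_iff]

theorem ker_aeval_eq_span_of_mul_self_eq [Nontrivial R] (hg : g * g = c • 1)
    (hli : LinearIndependent R ![1, g]) :
    RingHom.ker (aeval g) = Ideal.span {X ^ 2 - C c} := by
  have hm : (X ^ 2 - C c : R[X]).Monic := monic_X_pow_sub_C c two_ne_zero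
  have hroot : aeval g (X ^ 2 - C c) = 0 := by
    simp [sq, hg, Algebra.algebraMap_eq_smul_one]
  refine le_antisymm (fun p hp => ?_) (Ideal.span_le.2 <| Set.singleton_subset_iff.2 hroot)
  rw [Ideal.mem_span_singleton, ← modByMonic_eq_zero_iff_dvd hm]
  have hrem : aeval g (p %ₘ (X ^ 2 - C c)) = 0 := by
    rw [modByMonic_eq_sub_mul_div, map_sub, map_mul, hroot, zero_mul, sub_zero]
    exact hp
  have hdeg : (p %ₘ (X ^ 2 - C c)).degree ≤ 1 := by
    have := degree_modByMonic_lt p hm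
    rw [degree_X_pow_sub_C two_pos] at this
    exact Order.le_of_lt_succ this
  rw [eq_X_add_C_of_degree_le_one hdeg] at hrem ⊢
  obtain ⟨h0, h1⟩ := LinearIndependent.pair_iff.1 hli _ _
    (by rw [add_comm]; simpa [Algebra.algebraMap_eq_smul_one] using hrem)
  simp [h0, h1]

noncomputable def quotientEquivAdjoinOfMulSelfEq [Nontrivial R] (hg : g * g = c • 1)
    (hli : LinearIndependent R ![1, g]) :
    (R[X] ⧸ Ideal.span {X ^ 2 - C c}) ≃ₐ[R] Algebra.adjoin R {g} :=
  let f : R[X] →ₐ[R] Algebra.adjoin R {g} := (aeval g).codRestrict _ fun p => by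
    rw [Algebra.adjoin_singleton_eq_range_aeval]
    exact ⟨p, rfl⟩
  have hf : Function.Surjective f := by
    rintro ⟨y, hy⟩
    rw [Algebra.adjoin_singleton_eq_range_aeval] at hy
    obtain ⟨p, rfl⟩ := hy
    exact ⟨p, rfl⟩
  have hker : RingHom.ker f = Ideal.span {X ^ 2 - C c} := by
    rw [← ker_aeval_eq_span_of_mul_self_eq hg hli]
    ext p
    exact Subtype.ext_iff
  (Ideal.quotientEquivAlgOfEq R hker.symm).trans (Ideal.quotientKerAlgEquivOfSurjective hf)

end QuadraticElement

section SplinePair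

variable {R : Type*} [CommRing R] {a : R}

theorem pair_neg_mul_self : ![-a, a] * ![-a, a] = (a ^ 2) • (1 : Fin 2 → R) := by
  ext i
  fin_cases i <;> simp [sq]

theorem linearIndependent_one_pair_neg (h2 : IsUnit (2 : R)) (ha : a ∈ nonZeroDivisors R) :
    LinearIndependent R ![1, ![-a, a]] := by
  refine LinearIndependent.pair_iff.2 fun s t hst => ?_
  have h0 : s * 1 + t * -a = 0 := congrFun hst 0
  have h1 : s * 1 + t * a = 0 := congrFun hst 1
  have ht : t = 0 := by
    refine (mem_nonZeroDivisors_iff_right.1 ha) t ?_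
    exact h2.mul_right_eq_zero.1 (by linear_combination h1 - h0)
  subst ht
  exact ⟨by simpa using h0, rfl⟩

theorem mem_span_one_pair_neg_iff (h2 : IsUnit (2 : R)) {v : Fin 2 → R} :
    v ∈ Submodule.span R {1, ![-a, a]} ↔ v 0 - v 1 ∈ Ideal.span {a} := by
  rw [Submodule.mem_span_pair, Ideal.mem_span_singleton']
  constructor
  · rintro ⟨s, t, rfl⟩
    exact ⟨-2 * t, show _ = (s * 1 + t * -a) - (s * 1 + t * a) by ring⟩
  · rintro ⟨q, hq⟩
    obtain ⟨u, hu⟩ := h2.exists_right_inv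
    refine ⟨u * (v 0 + v 1), -(u * q), funext <| Fin.forall_fin_two.2 ⟨?_, ?_⟩⟩
    · show u * (v 0 + v 1) * 1 + -(u * q) * -a = v 0
      linear_combination u * hq + v 0 * hu
    · show u * (v 0 + v 1) * 1 + -(u * q) * a = v 1
      linear_combination -u * hq + v 1 * hu

end SplinePair

/-- For `R = ℝ[X]` and `S = {g : Fin 2 → R | g 0 − g 1 ∈ (X²)}`:
(a) `S` is the `R`-subalgebra of `Fin 2 → R` generated by `g = (−X², X²)`;
(b) `{(1,1), (−X², X²)}` is an `R`-module basis of `S`;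
(c) `g * g = X⁴ • (1,1)`, and `S ≅ R[g]/(g² − X⁴)` as `R`-algebras. -/
theorem stmt_5 (S : Submodule (Polynomial ℝ) (Fin 2 → Polynomial ℝ))
    (hS : ∀ v : Fin 2 → Polynomial ℝ,
      v ∈ S ↔ v 0 - v 1 ∈ Ideal.span {(X : Polynomial ℝ) ^ 2}) :
    (Subalgebra.toSubmodule (Algebra.adjoin (Polynomial ℝ) {gElt}) = S) ∧
    (∃ b : Module.Basis (Fin 2) (Polynomial ℝ) S,
      ((b 0 : Fin 2 → Polynomial ℝ) = 1 ∧ (b 1 : Fin 2 → Polynomial ℝ) = gElt)) ∧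
    (gElt * gElt = ((X : Polynomial ℝ) ^ 4) • (1 : Fin 2 → Polynomial ℝ)) ∧
    Nonempty
      ((Polynomial (Polynomial ℝ) ⧸
          Ideal.span {(X : Polynomial (Polynomial ℝ)) ^ 2 - C ((X : Polynomial ℝ) ^ 4)})
        ≃ₐ[Polynomial ℝ] Algebra.adjoin (Polynomial ℝ) {gElt}) := by
  have h2 : IsUnit (2 : ℝ[X]) := isUnit_C.2 (isUnit_iff_ne_zero.2 two_ne_zero)
  have hX : (X ^ 2 : ℝ[X]) ∈ nonZeroDivisors ℝ[X] :=
    mem_nonZeroDivisors_of_ne_zero (pow_ne_zero 2 X_ne_zero)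
  have hsq : gElt * gElt = (X : ℝ[X]) ^ 4 • (1 : Fin 2 → ℝ[X]) := by
    rw [gElt, pair_neg_mul_self, ← pow_mul]
  have hli : LinearIndependent ℝ[X] ![1, gElt] := linearIndependent_one_pair_neg h2 hX
  have hspan : Submodule.span ℝ[X] {1, gElt} = S := by
    ext v
    rw [hS]
    exact mem_span_one_pair_neg_iff h2
  have hrange : Submodule.span ℝ[X] (Set.range ![1, gElt]) = S := by
    rw [Matrix.range_cons_cons_empty, hspan]
  refine ⟨(toSubmodule_adjoin_singleton_eq_span_pair hsq).trans hspan,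
    ⟨(Module.Basis.span hli).map (LinearEquiv.ofEq _ _ hrange), by simp, by simp⟩, hsq,
    ⟨quotientEquivAdjoinOfMulSelfEq hsq hli⟩⟩
end

section
/- Let R := Polynomial ℝ (variable denoted z) and A := MvPolynomial (Fin 2) R with x := X 0, y := X 1, and z := C Polynomial.X ∈ A. Let S := {g : Fin 3 → A | g 0 − g 1 ∈ Ideal.span {x}, g 1 − g 2 ∈ Ideal.span {y}, g 0 − g 2 ∈ Ideal.span {x + y − z}}, an A-submodule of Fin 3 → A. Then the quotient (Fin 3 → A) ⧸ S is flat as an R-module. -/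
/-- The base ring `R = ℝ[z]`. -/
abbrev RR : Type := Polynomial ℝ

/-- The algebra `A = ℝ[z][x,y] = MvPolynomial (Fin 2) ℝ[z]`. -/
abbrev AA : Type := MvPolynomial (Fin 2) RR

/-- `x ∈ A`. -/
noncomputable def xA : AA := MvPolynomial.X 0
/-- `y ∈ A`. -/
noncomputable def yA : AA := MvPolynomial.X 1
/-- `z ∈ A` (the image of the coefficient variable). -/
noncomputable def zA : AA := MvPolynomial.C Polynomial.X

/-- The quasi-spline module
`S = {(g₁,g₂,g₃) | g₁−g₂ ∈ (x), g₂−g₃ ∈ (y), g₁−g₃ ∈ (x+y−z)} ⊆ A³`. -/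
noncomputable def SA : Submodule AA (Fin 3 → AA) :=
  Submodule.comap
      ((LinearMap.proj 0 : (Fin 3 → AA) →ₗ[AA] AA) - (LinearMap.proj 1 : (Fin 3 → AA) →ₗ[AA] AA))
      (Ideal.span {xA}) ⊓
    Submodule.comap
      ((LinearMap.proj 1 : (Fin 3 → AA) →ₗ[AA] AA) - (LinearMap.proj 2 : (Fin 3 → AA) →ₗ[AA] AA))
      (Ideal.span {yA}) ⊓
    Submodule.comap
      ((LinearMap.proj 0 : (Fin 3 → AA) →ₗ[AA] AA) - (LinearMap.proj 2 : (Fin 3 → AA) →ₗ[AA] AA))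
      (Ideal.span {xA + yA - zA})

/-!
Over the principal ideal domain `ℝ[z]` a module is flat as soon as it is torsion-free. The map
`g ↦ (g₁ - g₂ mod x, g₂ - g₃ mod y, g₁ - g₃ mod x + y - z)` has kernel `S`, so `A³ ⧸ S` embeds into
`A/(x) × A/(y) × A/(x + y - z)`. Each factor `A/(f)` is a domain because `f` is prime, and `ℝ[z]`
injects into it because `f` is killed by an `ℝ[z]`-algebra retraction `A → ℝ[z]`; a domain
containing `ℝ[z]` is torsion-free over it.
-/

section TorsionFree

variable {R A : Type*} [CommRing R] [CommRing A] [Algebra R A]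

theorem Ideal.isTorsionFree_quotient_span_singleton [IsDomain R] {f : A} (hf : Prime f)
    (φ : A →ₐ[R] R) (hφ : φ f = 0) : Module.IsTorsionFree R (A ⧸ Ideal.span {f}) := by
  have : (Ideal.span {f}).IsPrime := (Ideal.span_singleton_prime hf.ne_zero).2 hf
  have hker : ∀ a ∈ Ideal.span {f}, φ a = 0 := by
    intro a ha
    obtain ⟨b, rfl⟩ := Ideal.mem_span_singleton'.1 ha
    simp [hφ]
  rw [Module.isTorsionFree_iff_algebraMap_injective]
  exact Function.LeftInverse.injective (g := Ideal.Quotient.liftₐ _ φ hker) fun r => by simp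

variable {M N : Type*} [AddCommGroup M] [Module A M] [Module R M] [IsScalarTower R A M]
  [AddCommGroup N] [Module A N] [Module R N] [IsScalarTower R A N] [Module.IsTorsionFree R N]

theorem LinearMap.isTorsionFree_quotient_of_ker_eq {p : Submodule A M} (Φ : M →ₗ[A] N)
    (hp : LinearMap.ker Φ = p) : Module.IsTorsionFree R (M ⧸ p) := by
  subst hp
  exact Function.Injective.moduleIsTorsionFree _
    (LinearMap.ker_eq_bot.1 ((LinearMap.ker Φ).ker_liftQ_eq_bot' Φ rfl))
    (LinearMap.map_smul_of_tower _)

end TorsionFree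

namespace MvPolynomial

variable {R : Type*} [CommRing R]

theorem isTorsionFree_quotient_span_X [IsDomain R] {σ : Type*} (i : σ) :
    Module.IsTorsionFree R (MvPolynomial σ R ⧸ Ideal.span {(X i : MvPolynomial σ R)}) :=
  Ideal.isTorsionFree_quotient_span_singleton X_prime (aeval (0 : σ → R)) (by simp)

noncomputable def shear (c : R) : MvPolynomial (Fin 2) R ≃ₐ[R] MvPolynomial (Fin 2) R :=
  AlgEquiv.ofAlgHom (aeval ![X 0 + X 1 - C c, X 1]) (aeval ![X 0 - X 1 + C c, X 1])
    (by ext i; fin_cases i <;> simp [algebraMap_eq]; ring)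
    (by ext i; fin_cases i <;> simp [algebraMap_eq]; ring)

theorem prime_X_zero_add_X_one_sub_C [IsDomain R] (c : R) :
    Prime (X 0 + X 1 - C c : MvPolynomial (Fin 2) R) := by
  have : shear c (X 0) = X 0 + X 1 - C c := by simp [shear]
  rw [← this]
  exact (MulEquiv.prime_iff (shear c).toMulEquiv).2 X_prime

theorem isTorsionFree_quotient_span_X_zero_add_X_one_sub_C [IsDomain R] (c : R) :
    Module.IsTorsionFree R (MvPolynomial (Fin 2) R ⧸ Ideal.span {X 0 + X 1 - C c}) :=
  Ideal.isTorsionFree_quotient_span_singleton (prime_X_zero_add_X_one_sub_C c) (aeval ![c, 0])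
    (by simp)

end MvPolynomial

open LinearMap in
noncomputable def edgeDifferences : (Fin 3 → AA) →ₗ[AA]
    ((AA ⧸ Ideal.span {xA}) × (AA ⧸ Ideal.span {yA})) × (AA ⧸ Ideal.span {xA + yA - zA}) :=
  (((Ideal.span {xA}).mkQ ∘ₗ ((proj 0 : (Fin 3 → AA) →ₗ[AA] AA) - proj 1)).prod
      ((Ideal.span {yA}).mkQ ∘ₗ ((proj 1 : (Fin 3 → AA) →ₗ[AA] AA) - proj 2))).prod
    ((Ideal.span {xA + yA - zA}).mkQ ∘ₗ ((proj 0 : (Fin 3 → AA) →ₗ[AA] AA) - proj 2))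

theorem ker_edgeDifferences : LinearMap.ker edgeDifferences = SA := by
  simp only [edgeDifferences, SA, LinearMap.ker_prod, LinearMap.ker_comp, Submodule.ker_mkQ]

/-- The quotient `(Fin 3 → A) ⧸ S` is flat as an `ℝ[z]`-module, i.e. the
quasi-spline module `S` is a `Z`-family over `Z = Spec ℝ[z]`. -/
theorem stmt_6 : Module.Flat RR ((Fin 3 → AA) ⧸ SA) := by
  have : Module.IsTorsionFree RR (AA ⧸ Ideal.span {xA}) :=
    MvPolynomial.isTorsionFree_quotient_span_X 0
  have : Module.IsTorsionFree RR (AA ⧸ Ideal.span {yA}) :=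
    MvPolynomial.isTorsionFree_quotient_span_X 1
  have : Module.IsTorsionFree RR (AA ⧸ Ideal.span {xA + yA - zA}) :=
    MvPolynomial.isTorsionFree_quotient_span_X_zero_add_X_one_sub_C Polynomial.X
  have : Module.IsTorsionFree RR ((Fin 3 → AA) ⧸ SA) :=
    edgeDifferences.isTorsionFree_quotient_of_ker_eq ker_edgeDifferences
  infer_instance
end

section
/- Let R := Polynomial ℝ (variable denoted z) and A := MvPolynomial (Fin 2) R with x := X 0, y := X 1, z := C Polynomial.X. Let S := {g : Fin 3 → A | g 0 − g 1 ∈ Ideal.span {x}, g 1 − g 2 ∈ Ideal.span {y}, g 0 − g 2 ∈ Ideal.span {x + y − z}}. Define v₀ := (1,1,1), v₁ := (0, z·x − x², z·x − x² − x·y), v₂ := (0, 0, z·y − x·y − y²), v₃ := (0, x·y, 0) as elements of Fin 3 → A. Then the family consisting of the elements x^a · y^b • v_i for all a, b ∈ ℕ and i ∈ {0,1,2}, together with the elements y^b • v₃ for all b ∈ ℕ, is a basis of S as an R-module: it is R-linearly independent and its R-span equals S. -/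
/-- `v₀ = (1,1,1)`. -/
noncomputable def v0 : Fin 3 → AA := ![1, 1, 1]
/-- `v₁ = (0, zx − x², zx − x² − xy)`. -/
noncomputable def v1 : Fin 3 → AA := ![0, zA * xA - xA ^ 2, zA * xA - xA ^ 2 - xA * yA]
/-- `v₂ = (0, 0, zy − xy − y²)`. -/
noncomputable def v2 : Fin 3 → AA := ![0, 0, zA * yA - xA * yA - yA ^ 2]
/-- `v₃ = (0, xy, 0)`. -/
noncomputable def v3 : Fin 3 → AA := ![0, xA * yA, 0]

/-- The putative `ℝ[z]`-basis of `S`: the elements `xᵃyᵇ • vᵢ` for `a b : ℕ`, `i ∈ {0,1,2}`,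
together with `yᵇ • v₃` for `b : ℕ`. -/
noncomputable def fam : (ℕ × ℕ × Fin 3) ⊕ ℕ → (Fin 3 → AA)
  | Sum.inl (a, b, i) => (xA ^ a * yA ^ b) • ![v0, v1, v2] i
  | Sum.inr b => yA ^ b • v3

/-!
Substituting `x = z` (and keeping `y`) kills `z - x` and sends both `y` and `x + y - z` to `y`.
Given `g ∈ S`, subtract `g₀ • v₀`; the second entry is then `x·h`, and the substitution shows
`h(z, 0) = 0`, so `h = c·(z - x) + y·q(y)` and subtracting `c • v₁ + q(y) • v₃` leaves `(0, 0, f)`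
with `f` divisible by `y` and by `x + y - z`, i.e. a multiple of `v₂`. The same substitution shows
that these coefficients are unique once the coefficient of `v₃` is a polynomial in `y` alone. Hence
`(c, q) ↦ ∑ cᵢ • vᵢ + q(y) • v₃` is an `ℝ[z]`-linear isomorphism `A³ × ℝ[z][y] ≃ S`, and `fam` is
the image of the monomial basis.
-/

open MvPolynomial

theorem MvPolynomial.X_sub_dvd_sub_aeval_update {σ R : Type*} [CommRing R] [DecidableEq σ]
    (i : σ) (q p : MvPolynomial σ R) : X i - q ∣ p - aeval (Function.update X i q) p := by
  rw [← Ideal.mem_span_singleton, ← Ideal.Quotient.eq]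
  suffices (Ideal.Quotient.mkₐ R _).comp (aeval (Function.update X i q)) =
      Ideal.Quotient.mkₐ R (Ideal.span {X i - q}) from (AlgHom.congr_fun this p).symm
  ext j
  rcases eq_or_ne j i with rfl | hj
  · simp only [AlgHom.comp_apply, aeval_X, Function.update_self, Ideal.Quotient.mkₐ_eq_mk,
      Ideal.Quotient.eq, Ideal.mem_span_singleton]
    exact ⟨-1, by ring⟩
  · simp [hj]

lemma xA_ne_zero : xA ≠ 0 := X_ne_zero _
lemma yA_ne_zero : yA ≠ 0 := X_ne_zero _

lemma zA_sub_xA_ne_zero : zA - xA ≠ 0 := fun h => by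
  simpa [xA, zA] using congrArg constantCoeff h

lemma zA_sub_xA_sub_yA_ne_zero : zA - xA - yA ≠ 0 := fun h => by
  simpa [xA, yA, zA] using congrArg constantCoeff h

noncomputable def evalXAtZ : AA →ₐ[RR] Polynomial RR :=
  aeval ![Polynomial.C Polynomial.X, Polynomial.X]

@[simp] lemma evalXAtZ_xA : evalXAtZ xA = Polynomial.C Polynomial.X := by simp [evalXAtZ, xA]
@[simp] lemma evalXAtZ_yA : evalXAtZ yA = Polynomial.X := by simp [evalXAtZ, yA]
@[simp] lemma evalXAtZ_zA : evalXAtZ zA = Polynomial.C Polynomial.X := by simp [evalXAtZ, zA]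

lemma evalXAtZ_aeval_yA (p : Polynomial RR) : evalXAtZ (Polynomial.aeval yA p) = p := by
  rw [← Polynomial.aeval_algHom_apply, evalXAtZ_yA, Polynomial.aeval_X_left, AlgHom.id_apply]

lemma xA_sub_zA_dvd_sub_aeval_evalXAtZ (h : AA) :
    xA - zA ∣ h - Polynomial.aeval yA (evalXAtZ h) := by
  have hsubst : Polynomial.aeval yA (evalXAtZ h) = aeval (Function.update X 0 zA) h := by
    rw [← AlgHom.comp_apply, evalXAtZ, comp_aeval]
    congr 1
    ext i; fin_cases i <;> simp [yA, zA]
  rw [hsubst]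
  exact X_sub_dvd_sub_aeval_update 0 zA h

lemma mem_SA_iff (g : Fin 3 → AA) :
    g ∈ SA ↔ xA ∣ g 0 - g 1 ∧ yA ∣ g 1 - g 2 ∧ xA + yA - zA ∣ g 0 - g 2 := by
  simp [SA, Ideal.mem_span_singleton, and_assoc]

lemma v0_mem_SA : v0 ∈ SA := by
  simp [mem_SA_iff, v0]

lemma v1_mem_SA : v1 ∈ SA := by
  refine (mem_SA_iff v1).2 ⟨⟨xA - zA, ?_⟩, ⟨xA, ?_⟩, ⟨xA, ?_⟩⟩ <;> simp [v1] <;> ring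

lemma v2_mem_SA : v2 ∈ SA := by
  refine (mem_SA_iff v2).2 ⟨by simp [v2], ⟨xA + yA - zA, ?_⟩, ⟨yA, ?_⟩⟩ <;> simp [v2] <;> ring

lemma v3_mem_SA : v3 ∈ SA := by
  refine (mem_SA_iff v3).2 ⟨⟨-yA, ?_⟩, ⟨xA, ?_⟩, by simp [v3]⟩ <;> simp [v3] <;> ring

lemma exists_eq_smul_v2 {g : Fin 3 → AA} (hg : g ∈ SA) (h0 : g 0 = 0) (h1 : g 1 = 0) :
    ∃ c : AA, g = c • v2 := by
  obtain ⟨-, ⟨u, hu⟩, hxyz⟩ := (mem_SA_iff g).1 hg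
  rw [h1, zero_sub] at hu
  rw [h0, zero_sub, hu] at hxyz
  have hsu : aeval (Function.update X 0 (zA - yA)) u = 0 := by
    obtain ⟨k, hk⟩ := hxyz
    have := congrArg (aeval (Function.update X 0 (zA - yA))) hk
    simpa [xA, yA, zA, yA_ne_zero] using this
  obtain ⟨w, hw⟩ := X_sub_dvd_sub_aeval_update 0 (zA - yA) u
  rw [hsu, sub_zero, ← xA] at hw
  refine ⟨w, funext fun i => ?_⟩
  fin_cases i
  · simp [v2, h0]
  · simp [v2, h1]
  · simp [v2]
    linear_combination -hu - yA * hw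

lemma exists_sub_smul_v1_sub_smul_v3_apply_one_eq_zero {g : Fin 3 → AA} (hg : g ∈ SA)
    (h0 : g 0 = 0) :
    ∃ (c : AA) (p : Polynomial RR), (g - c • v1 - Polynomial.aeval yA p • v3) 1 = 0 := by
  obtain ⟨⟨h, hh⟩, h12, hxyz⟩ := (mem_SA_iff g).1 hg
  rw [h0, zero_sub] at hh hxyz
  have hX : Polynomial.X ∣ evalXAtZ (g 1) := by
    have h₁₂ := map_dvd evalXAtZ h12
    have h₂ := map_dvd evalXAtZ hxyz
    simp only [map_sub, map_add, map_neg, evalXAtZ_xA, evalXAtZ_yA, evalXAtZ_zA,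
      add_sub_cancel_left] at h₁₂ h₂
    simpa using dvd_sub h₁₂ h₂
  obtain ⟨p, hp⟩ : Polynomial.X ∣ evalXAtZ h := by
    rw [← neg_neg (g 1), hh, map_neg, map_mul, evalXAtZ_xA, Polynomial.X_dvd_iff,
      Polynomial.coeff_neg, Polynomial.coeff_C_mul, neg_eq_zero] at hX
    exact Polynomial.X_dvd_iff.2 ((mul_eq_zero.1 hX).resolve_left Polynomial.X_ne_zero)
  obtain ⟨k, hk⟩ := xA_sub_zA_dvd_sub_aeval_evalXAtZ h
  rw [hp, map_mul, Polynomial.aeval_X] at hk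
  refine ⟨k, -p, ?_⟩
  simp only [v1, v3, Pi.sub_apply, Pi.smul_apply, smul_eq_mul, Matrix.cons_val_one,
    Matrix.cons_val_zero, map_neg]
  linear_combination -hh - xA * hk

noncomputable def vCombination : (Fin 3 → AA) × Polynomial RR →ₗ[RR] (Fin 3 → AA) :=
  ((Fintype.linearCombination AA ![v0, v1, v2]).restrictScalars RR).coprod
    ((LinearMap.toSpanSingleton AA _ v3).restrictScalars RR ∘ₗ (Polynomial.aeval yA).toLinearMap)

lemma vCombination_apply (c : Fin 3 → AA) (p : Polynomial RR) :
    vCombination (c, p) = c 0 • v0 + c 1 • v1 + c 2 • v2 + Polynomial.aeval yA p • v3 := by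
  simp [vCombination, Fintype.linearCombination_apply, Fin.sum_univ_three]

lemma mem_SA_iff_exists (g : Fin 3 → AA) :
    g ∈ SA ↔ ∃ (c : Fin 3 → AA) (p : Polynomial RR), vCombination (c, p) = g := by
  constructor
  · intro hg
    have hg₁ : g - g 0 • v0 ∈ SA := SA.sub_mem hg (SA.smul_mem _ v0_mem_SA)
    obtain ⟨c₁, p, hc₁⟩ := exists_sub_smul_v1_sub_smul_v3_apply_one_eq_zero hg₁
      (by simp only [v0, Pi.sub_apply, Pi.smul_apply, Matrix.cons_val_zero, smul_eq_mul, mul_one,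
        sub_self])
    have hg₂ : g - g 0 • v0 - c₁ • v1 - Polynomial.aeval yA p • v3 ∈ SA :=
      SA.sub_mem (SA.sub_mem hg₁ (SA.smul_mem _ v1_mem_SA)) (SA.smul_mem _ v3_mem_SA)
    obtain ⟨c₂, hc₂⟩ := exists_eq_smul_v2 hg₂ (by simp [v0, v1, v3, Matrix.vecHead]) hc₁
    refine ⟨![g 0, c₁, c₂], p, ?_⟩
    rw [vCombination_apply]
    simp only [Matrix.cons_val_zero, Matrix.cons_val_one, Matrix.cons_val_two, Matrix.head_cons,
      Matrix.tail_cons]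
    rw [← hc₂]
    abel
  · rintro ⟨c, p, rfl⟩
    rw [vCombination_apply]
    exact SA.add_mem (SA.add_mem (SA.add_mem (SA.smul_mem _ v0_mem_SA) (SA.smul_mem _ v1_mem_SA))
      (SA.smul_mem _ v2_mem_SA)) (SA.smul_mem _ v3_mem_SA)

lemma range_vCombination : LinearMap.range vCombination = SA.restrictScalars RR := by
  ext g
  simp [mem_SA_iff_exists g]

lemma ker_vCombination : LinearMap.ker vCombination = ⊥ := by
  refine LinearMap.ker_eq_bot'.2 ?_
  rintro ⟨c, p⟩ hcp
  rw [vCombination_apply] at hcp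
  have e0 : c 0 = 0 := by simpa [v0, v1, v2, v3] using congrFun hcp 0
  have e1 : c 0 + c 1 * (zA * xA - xA ^ 2) + Polynomial.aeval yA p * (xA * yA) = 0 := by
    simpa [v0, v1, v2, v3] using congrFun hcp 1
  have e2 : c 0 + c 1 * (zA * xA - xA ^ 2 - xA * yA) + c 2 * (zA * yA - xA * yA - yA ^ 2) = 0 := by
    simpa [v0, v1, v2, v3] using congrFun hcp 2
  have h1 : c 1 * (zA - xA) + yA * Polynomial.aeval yA p = 0 := by
    have : xA * (c 1 * (zA - xA) + yA * Polynomial.aeval yA p) = 0 := by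
      linear_combination e1 - e0
    exact (mul_eq_zero.1 this).resolve_left xA_ne_zero
  have hp : p = 0 := by
    simpa [evalXAtZ_aeval_yA, Polynomial.X_ne_zero] using congrArg evalXAtZ h1
  have hc1 : c 1 = 0 := by
    rw [hp, map_zero, mul_zero, add_zero] at h1
    exact (mul_eq_zero.1 h1).resolve_right zA_sub_xA_ne_zero
  have hc2 : c 2 = 0 := by
    have : c 2 * (yA * (zA - xA - yA)) = 0 := by
      linear_combination e2 - e0 - (zA * xA - xA ^ 2 - xA * yA) * hc1
    exact (mul_eq_zero.1 this).resolve_right (mul_ne_zero yA_ne_zero zA_sub_xA_sub_yA_ne_zero)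
  refine Prod.mk_eq_zero.2 ⟨funext fun i => ?_, hp⟩
  fin_cases i
  exacts [e0, hc1, hc2]

noncomputable def xyMonomialBasis : Module.Basis (ℕ × ℕ) RR AA :=
  (basisMonomials (Fin 2) RR).reindex (Finsupp.equivFunOnFinite.trans (finTwoArrowEquiv ℕ))

lemma xyMonomialBasis_apply (a b : ℕ) : xyMonomialBasis (a, b) = xA ^ a * yA ^ b := by
  rw [xyMonomialBasis, Module.Basis.reindex_apply, coe_basisMonomials, xA, yA, X_pow_eq_monomial,
    X_pow_eq_monomial, monomial_mul, one_mul]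
  congr 1
  ext i
  fin_cases i <;> simp

noncomputable def monomialBasis :
    Module.Basis ((ℕ × ℕ × Fin 3) ⊕ ℕ) RR ((Fin 3 → AA) × Polynomial RR) :=
  ((Pi.basis fun _ : Fin 3 => xyMonomialBasis).reindex
    ((Equiv.sigmaEquivProd _ _).trans ((Equiv.prodComm _ _).trans (Equiv.prodAssoc _ _ _)))).prod
    (Polynomial.basisMonomials RR)

lemma vCombination_comp_monomialBasis : vCombination ∘ monomialBasis = fam := by
  ext (⟨a, b, i⟩ | n) : 1
  · simp [monomialBasis, vCombination, xyMonomialBasis_apply, fam]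
  · simp [monomialBasis, vCombination, fam]

/-- The family `fam` is a basis of `S` as an `ℝ[z]`-module: it is
`ℝ[z]`-linearly independent and its `ℝ[z]`-span is exactly `S`. -/
theorem stmt_7 :
    LinearIndependent RR fam ∧
      Submodule.span RR (Set.range fam) = Submodule.restrictScalars RR SA := by
  rw [← vCombination_comp_monomialBasis, Set.range_comp, Submodule.span_image,
    monomialBasis.span_eq, Submodule.map_top, range_vCombination]
  exact ⟨monomialBasis.linearIndependent.map' _ ker_vCombination, rfl⟩
end

section
/- Let R := Polynomial ℝ (variable denoted z), A := MvPolynomial (Fin 2) R with x := X 0, y := X 1, z := C Polynomial.X, and let S := {g : Fin 3 → A | g 0 − g 1 ∈ Ideal.span {x}, g 1 − g 2 ∈ Ideal.span {y}, g 0 − g 2 ∈ Ideal.span {x + y − z}}. Let ev₀ : A → MvPolynomial (Fin 2) ℝ be the ring homomorphism induced by evaluating the coefficient variable z at 0 (i.e., applying Polynomial.eval 0 : ℝ[z] → ℝ to coefficients) and sending x ↦ x, y ↦ y. Then the triple (y, y − x, −x) lies in S₀ := {h : Fin 3 → MvPolynomial (Fin 2) ℝ | h 0 − h 1 ∈ Ideal.span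 {x}, h 1 − h 2 ∈ Ideal.span {y}, h 0 − h 2 ∈ Ideal.span {x + y}}, but there is no g ∈ S with ev₀(g i) equal to the i-th entry of (y, y − x, −x) for all i; i.e., the natural map from the z=0 restriction of S to S₀ is not surjective. -/
/-- The evaluation `z ↦ 0` on coefficients: `ℝ[z][x,y] → ℝ[x,y]`, fixing `x` and `y`. -/
noncomputable def ev0 : AA →+* MvPolynomial (Fin 2) ℝ :=
  MvPolynomial.map (Polynomial.evalRingHom (0 : ℝ))

/-- The triple `(y, y − x, −x)` over `ℝ[x,y]`. -/
noncomputable def tQS : Fin 3 → MvPolynomial (Fin 2) ℝ :=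
  ![MvPolynomial.X 1, MvPolynomial.X 1 - MvPolynomial.X 0, -MvPolynomial.X 0]

/-- The triple `(y, y−x, −x)` satisfies the `z = 0` ideal
difference-conditions (with ideals `(x)`, `(y)`, `(x+y)`), but it is not the image under
`z ↦ 0` of any element of the family `S`; i.e. `S|_{z=0} → S_{I(z=0)}` is not surjective. -/
theorem stmt_8 :
    (tQS 0 - tQS 1 ∈ Ideal.span {(MvPolynomial.X 0 : MvPolynomial (Fin 2) ℝ)} ∧
      tQS 1 - tQS 2 ∈ Ideal.span {(MvPolynomial.X 1 : MvPolynomial (Fin 2) ℝ)} ∧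
      tQS 0 - tQS 2 ∈
        Ideal.span {(MvPolynomial.X 0 + MvPolynomial.X 1 : MvPolynomial (Fin 2) ℝ)}) ∧
    ¬ ∃ g ∈ SA, ∀ i, ev0 (g i) = tQS i := by

  constructor
  · refine ⟨?_, ?_, ?_⟩
    · have h : tQS 0 - tQS 1 = MvPolynomial.X 0 := by
        simp [tQS]
      rw [h]; exact Ideal.subset_span rfl
    · have h : tQS 1 - tQS 2 = MvPolynomial.X 1 := by
        simp [tQS]
      rw [h]; exact Ideal.subset_span rfl
    · have h : tQS 0 - tQS 2 = MvPolynomial.X 0 + MvPolynomial.X 1 := by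
        simp [tQS]; ring
      rw [h]; exact Ideal.subset_span rfl
  · rintro ⟨g, hg, hev⟩
    obtain ⟨⟨h01, h12⟩, h02⟩ := hg
    have h01' : g 0 - g 1 ∈ Ideal.span {xA} := h01
    have h12' : g 1 - g 2 ∈ Ideal.span {yA} := h12
    have h02' : g 0 - g 2 ∈ Ideal.span {xA + yA - zA} := h02
    rw [Ideal.mem_span_singleton] at h01' h12' h02'
    obtain ⟨a, ha⟩ := h01'
    obtain ⟨b, hb⟩ := h12'
    obtain ⟨c, hc⟩ := h02' 
    -- combine: (x+y-z)*c = x*a + y*b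
    have heq : (xA + yA - zA) * c = xA * a + yA * b := by
      rw [← hc, ← ha, ← hb]; ring
    -- constant coefficient: -z * cc(c) = 0, so cc(c) = 0
    have hcc : MvPolynomial.constantCoeff c = 0 := by
      have := congrArg MvPolynomial.constantCoeff heq
      simp only [map_mul, map_add, map_sub, xA, yA, zA,
        MvPolynomial.constantCoeff_X, MvPolynomial.constantCoeff_C] at this
      have h2 : (Polynomial.X : RR) * MvPolynomial.constantCoeff c = 0 := by
        linear_combination -this
      rcases mul_eq_zero.mp h2 with h | h
      · exact absurd h Polynomial.X_ne_zero
      · exact h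
    -- ev0 side: (x+y) * ev0 c = x + y
    have hev02 : ev0 (g 0 - g 2) =
        MvPolynomial.X 0 + MvPolynomial.X 1 := by
      rw [map_sub, hev 0, hev 2]
      simp only [tQS, Matrix.cons_val_zero, Matrix.cons_val_two, Matrix.tail_cons, Matrix.head_cons]; ring
    have hzero : ev0 zA = 0 := by
      simp [ev0, zA]
    have hx : ev0 xA = MvPolynomial.X 0 := by simp [ev0, xA]
    have hy : ev0 yA = MvPolynomial.X 1 := by simp [ev0, yA]
    have hmul : (MvPolynomial.X 0 + MvPolynomial.X 1 : MvPolynomial (Fin 2) ℝ) * ev0 c =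
        MvPolynomial.X 0 + MvPolynomial.X 1 := by
      have := congrArg ev0 hc.symm
      rw [map_mul, map_sub, map_add, hx, hy, hzero, hev02] at this
      linear_combination this
    have hxy_ne : (MvPolynomial.X 0 + MvPolynomial.X 1 : MvPolynomial (Fin 2) ℝ) ≠ 0 := by
      intro h
      have := congrArg (MvPolynomial.coeff (Finsupp.single 0 1)) h
      simp [MvPolynomial.coeff_X', Finsupp.single_eq_single_iff] at this
    have hc1 : ev0 c = 1 := by
      have h1 : (MvPolynomial.X 0 + MvPolynomial.X 1 : MvPolynomial (Fin 2) ℝ) * (ev0 c - 1) = 0 := by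
        rw [mul_sub, hmul]; ring
      rcases mul_eq_zero.mp h1 with h | h
      · exact absurd h hxy_ne
      · exact sub_eq_zero.mp h
    -- but constantCoeff (ev0 c) = eval 0 (cc c) = 0, contradiction
    have : (1 : ℝ) = 0 := by
      have h2 : MvPolynomial.constantCoeff (ev0 c) = 0 := by
        rw [ev0, MvPolynomial.constantCoeff_map, hcc]
        simp
      rw [hc1] at h2
      simp at h2
    exact one_ne_zero this
end

section
/- Let R be a commutative ring, A a commutative R-algebra, and F : ℕ → Submodule R A a multiplicative filtration: 1 ∈ F 0, F is monotone (F d ≤ F (d+1) for all d), and F i * F j ≤ F (i+j) for all i, j. Let ^hA := {p ∈ Polynomial A | ∀ d, p.coeff d ∈ F d}, an R-subalgebra of Polynomial A containing X. Let s be a natural number and S an A-subalgebra of the product ring Fin s → A (pointwise operations, containing the diagonal copy of A). Define ^hS := {p : Fin s → Polynomial A | ∀ d, (fun i => (p i).coeff d) ∈ S and (p i).coeff d ∈ F d for all i}. Then ^hS contains the diagonal image of ^hA in Fin s → Polynomial A and is closed under pointwise multiplication; i.e., ^hS is an ^hA-subalgebra of (Fin s → Polynomial A). -/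
/-!
Regard a tuple `p : Fin s → A[X]` as a polynomial over `Fin s → A`, whose `d`-th coefficient is
the tuple of the `d`-th coefficients of the `p i`. Then `^hS` consists of the polynomials whose
`d`-th coefficient lies in `G d := S ⊓ (F d)^s`, and `G i * G j ⊆ G (i + j)`. Such a degreewise
condition is preserved by products, since `(p * q).coeff d` is a sum of products
`p.coeff i * q.coeff j` with `i + j = d`.
-/

namespace Polynomial

theorem coeff_mul_mem_of_coeff_mem {B : Type*} [Semiring B] {G : ℕ → AddSubmonoid B}
    (hG : ∀ ⦃i j : ℕ⦄ ⦃a b : B⦄, a ∈ G i → b ∈ G j → a * b ∈ G (i + j))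
    {p q : B[X]} (hp : ∀ n, p.coeff n ∈ G n) (hq : ∀ n, q.coeff n ∈ G n) (n : ℕ) :
    (p * q).coeff n ∈ G n := by
  rw [coeff_mul]
  refine sum_mem fun x hx => ?_
  rw [← Finset.HasAntidiagonal.mem_antidiagonal.mp hx]
  exact hG (hp x.1) (hq x.2)

theorem coeff_piEquiv_symm {ι : Type*} [Finite ι] {R : ι → Type*} [∀ i, Semiring (R i)]
    (p : ∀ i, (R i)[X]) (n : ℕ) :
    ((piEquiv R).symm p).coeff n = fun i => (p i).coeff n := by
  funext i
  conv_rhs => rw [← (piEquiv R).apply_symm_apply p]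
  exact (coeff_map (Pi.evalRingHom R i) _).symm

end Polynomial

open Polynomial in
theorem stmt_9_general {R A : Type*} [CommRing R] [CommRing A] [Algebra R A]
    (F : ℕ → Submodule R A)
    (hmul : ∀ i j, F i * F j ≤ F (i + j))
    (s : ℕ) (S : Subalgebra A (Fin s → A)) :
    let hA : Set (Polynomial A) := {p | ∀ d, p.coeff d ∈ F d}
    let hS : Set (Fin s → Polynomial A) :=
      {p | ∀ d, ((fun i => (p i).coeff d) : Fin s → A) ∈ S ∧ ∀ i, (p i).coeff d ∈ F d}
    (∀ q ∈ hA, ((fun _ => q) : Fin s → Polynomial A) ∈ hS) ∧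
    (∀ p q : Fin s → Polynomial A, p ∈ hS → q ∈ hS → p + q ∈ hS) ∧
    (∀ p q : Fin s → Polynomial A, p ∈ hS → q ∈ hS → p * q ∈ hS) := by
  intro hA hS
  let G (d : ℕ) : AddSubmonoid (Fin s → A) :=
    S.toAddSubmonoid ⊓ AddSubmonoid.pi Set.univ fun _ => (F d).toAddSubmonoid
  have hG : ∀ ⦃i j : ℕ⦄ ⦃a b : Fin s → A⦄, a ∈ G i → b ∈ G j → a * b ∈ G (i + j) :=
    fun i j _ _ ha hb => ⟨S.mul_mem ha.1 hb.1, fun k _ =>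
      hmul i j (Submodule.mul_mem_mul (ha.2 k trivial) (hb.2 k trivial))⟩
  have mem_hS (p : Fin s → A[X]) :
      p ∈ hS ↔ ∀ d, ((piEquiv _).symm p).coeff d ∈ G d := by
    simp [hS, G, coeff_piEquiv_symm, AddSubmonoid.mem_pi]
  refine ⟨fun q hq d => ⟨S.algebraMap_mem (q.coeff d), fun _ => hq d⟩, fun p q hp hq => ?_,
    fun p q hp hq => ?_⟩
  · rw [mem_hS] at hp hq ⊢
    simpa only [map_add, coeff_add] using fun d => add_mem (hp d) (hq d)
  · rw [mem_hS] at hp hq ⊢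
    simpa only [map_mul] using coeff_mul_mem_of_coeff_mem hG hp hq

/-- Let `F` be a multiplicative filtration of a commutative `R`-algebra `A`,
`^hA = {p ∈ A[X] | ∀ d, p.coeff d ∈ F d}` the homogenization, and `S` an `A`-subalgebra of
the product ring `Fin s → A`.  Then the Billera–Rose homogenization
`^hS = {p : Fin s → A[X] | ∀ d, the tuple of degree-d coefficients lies in S and in F d}`
contains the diagonal image of `^hA` and is closed under pointwise addition and
multiplication; i.e. `^hS` is an `^hA`-subalgebra of `Fin s → A[X]`. -/
theorem stmt_9 {R A : Type*} [CommRing R] [CommRing A] [Algebra R A]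
    (F : ℕ → Submodule R A) (h1 : (1 : A) ∈ F 0) (hmono : ∀ d, F d ≤ F (d + 1))
    (hmul : ∀ i j, F i * F j ≤ F (i + j))
    (s : ℕ) (S : Subalgebra A (Fin s → A)) :
    let hA : Set (Polynomial A) := {p | ∀ d, p.coeff d ∈ F d}
    let hS : Set (Fin s → Polynomial A) :=
      {p | ∀ d, ((fun i => (p i).coeff d) : Fin s → A) ∈ S ∧ ∀ i, (p i).coeff d ∈ F d}
    (∀ q ∈ hA, ((fun _ => q) : Fin s → Polynomial A) ∈ hS) ∧
    (∀ p q : Fin s → Polynomial A, p ∈ hS → q ∈ hS → p + q ∈ hS) ∧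
    (∀ p q : Fin s → Polynomial A, p ∈ hS → q ∈ hS → p * q ∈ hS) :=
  stmt_9_general F hmul s S
end

section
/- Let R be a commutative ring, A a commutative R-algebra, and F : ℕ → Submodule R A a multiplicative exhaustive filtration: 1 ∈ F 0, F is monotone, F i * F j ≤ F (i+j) for all i, j, and every element of A lies in F d for some d. Let ^hA := {p ∈ Polynomial A | ∀ d, p.coeff d ∈ F d}, an R-subalgebra of Polynomial A, and note X − 1 ∈ ^hA. Then the evaluation-at-1 map ^hA → A, p ↦ Polynomial.eval 1 p, is a surjective R-algebra homomorphism whose kernel equals the ideal of ^hA generated by the element X − 1. -/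
/-- Let `F` be a multiplicative exhaustive filtration of a commutative
`R`-algebra `A`, and let `B = ^hA ⊆ A[X]` be the `R`-subalgebra of polynomials `p` with
`p.coeff d ∈ F d` for all `d` (the homogenization of `A`).  Then `X − 1 ∈ ^hA`, and the
evaluation-at-1 map `^hA → A` is a surjective `R`-algebra homomorphism whose kernel is the
ideal of `^hA` generated by `X − 1`. -/
theorem stmt_10 {R A : Type*} [CommRing R] [CommRing A] [Algebra R A]
    (F : ℕ → Submodule R A) (h1 : (1 : A) ∈ F 0) (hmono : ∀ d, F d ≤ F (d + 1))
    (hmul : ∀ i j, F i * F j ≤ F (i + j)) (hexh : ∀ a : A, ∃ d, a ∈ F d)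
    (B : Subalgebra R (Polynomial A))
    (hB : ∀ p : Polynomial A, p ∈ B ↔ ∀ d, p.coeff d ∈ F d) :
    (Polynomial.X - 1 : Polynomial A) ∈ B ∧
    Function.Surjective (((Polynomial.aeval (1 : A)).restrictScalars R).comp B.val) ∧
    RingHom.ker (((Polynomial.aeval (1 : A)).restrictScalars R).comp B.val) =
      Ideal.span {b : B | (b : Polynomial A) = Polynomial.X - 1} := by
  have hmono' : Monotone F := monotone_nat_of_le_succ hmono
  have hz : (Polynomial.X - 1 : Polynomial A) ∈ B := by
    rw [hB]
    intro d
    match d with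
    | 0 => simpa using neg_mem h1
    | 1 => simpa [Polynomial.coeff_one] using hmono 0 h1
    | (n + 2) => simp [Polynomial.coeff_X, Polynomial.coeff_one]
  refine ⟨hz, ?_, ?_⟩
  · intro a
    obtain ⟨d, hd⟩ := hexh a
    have hpB : (Polynomial.C a * Polynomial.X ^ d : Polynomial A) ∈ B := by
      rw [hB]
      intro n
      rw [Polynomial.coeff_C_mul, Polynomial.coeff_X_pow]
      by_cases h : d = n
      · subst h; simpa using hd
      · simp [Ne.symm h]
    exact ⟨⟨_, hpB⟩, by simp⟩
  · apply le_antisymm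
    · rintro ⟨p, hp⟩ hker
      have hev : Polynomial.eval 1 p = 0 := by
        have := hker
        rw [RingHom.mem_ker] at this
        simpa [Polynomial.coe_aeval_eq_eval] using this
      have hdvd : (Polynomial.X - Polynomial.C 1 : Polynomial A) ∣ p :=
        (Polynomial.dvd_iff_isRoot).2 hev
      obtain ⟨q, hq⟩ := hdvd
      -- coefficients of q lie in F
      have hcoeff : ∀ d, p.coeff d = (if d = 0 then 0 else q.coeff (d - 1)) - q.coeff d := by
        intro d
        have := congrArg (fun r => Polynomial.coeff r d) hq
        simp only [sub_mul, Polynomial.coeff_sub, one_mul, Polynomial.C_1] at this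
        match d with
        | 0 => simpa [Polynomial.mul_coeff_zero] using this
        | (n + 1) => simpa [Polynomial.coeff_X_mul] using this
      have hqF : ∀ d, q.coeff d ∈ F d := by
        intro d
        induction d with
        | zero =>
            have h0 := hcoeff 0
            simp at h0
            have := (hB p).1 hp 0
            rw [h0] at this
            simpa using neg_mem this
        | succ n ih =>
            have hn := hcoeff (n + 1)
            simp at hn
            have hpn := (hB p).1 hp (n + 1)
            have : q.coeff (n + 1) = q.coeff n - p.coeff (n + 1) := by
              rw [hn]; ring
            rw [this]
            exact sub_mem (hmono n ih) hpn
      have hqB : q ∈ B := (hB q).2 hqF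
      have : (⟨p, hp⟩ : B) = (⟨q, hqB⟩ : B) * ⟨Polynomial.X - 1, hz⟩ := by
        ext
        simp only [Subalgebra.coe_mul]
        rw [hq, Polynomial.C_1]
        ring
      rw [this]
      exact Ideal.mul_mem_left _ _ (Ideal.subset_span (by simp))
    · rw [Ideal.span_le]
      rintro b hb
      simp only [Set.mem_setOf_eq] at hb
      have : (((Polynomial.aeval (1 : A)).restrictScalars R).comp B.val) b = 0 := by
        have : Polynomial.eval 1 (b : Polynomial A) = 0 := by
          rw [hb]; simp
        simpa [Polynomial.coe_aeval_eq_eval] using this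
      simpa [RingHom.mem_ker] using this
end

section
/- Let R be a commutative ring, A a commutative R-algebra, and F : ℕ → Submodule R A a multiplicative exhaustive filtration: 1 ∈ F 0, F is monotone, F i * F j ≤ F (i+j), and every element of A lies in some F d. Let s be a natural number, M an A-submodule of Fin s → A, with induced filtration M_{≤d} := {m ∈ M | m i ∈ F d for all i}. Define ^hM := {p : Fin s → Polynomial A | ∀ d, (fun i => (p i).coeff d) ∈ M_{≤d}}. Then the componentwise evaluation-at-1 map ^hM → M, p ↦ (fun i => Polynomial.eval 1 (p i)), is surjective, and its kernel equals (X − 1) • ^hM := {q : Fin s → Polynomial A | ∃ q' ∈ ^hM, q i = (X − 1) * q' i for all i}. -/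
/-!
Evaluation at `1` sums the coefficient tuples of `p`, each of which lies in `M`. A tuple `m ∈ M`
with entries in `F D` lifts to `m • X ^ D`. If `p(1) = 0`, then `p = (X - 1) q` with
`q_d = -(p_0 + ⋯ + p_d)`, and this partial sum lies in `M_{≤d}` because the filtration is
increasing.
-/

open Polynomial Finset

theorem Polynomial.coeff_eq_neg_sum_range_of_eq_X_sub_one_mul {A : Type*} [Ring A]
    {p q : A[X]} (h : p = (X - 1) * q) (d : ℕ) :
    q.coeff d = -∑ e ∈ range (d + 1), p.coeff e := by
  induction d with
  | zero => simp [h, sub_mul, mul_coeff_zero]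
  | succ d ih =>
    rw [sum_range_succ, neg_add, ← ih, h, sub_mul, one_mul, coeff_sub, coeff_X_mul]
    abel

theorem Polynomial.exists_eq_X_sub_one_mul_of_eval_one_eq_zero {A : Type*} [CommRing A]
    {ι : Type*} {p : ι → A[X]} (hp : ∀ i, eval 1 (p i) = 0) :
    ∃ q : ι → A[X], (∀ i, p i = (X - 1) * q i) ∧
      ∀ d, (fun i => (q i).coeff d) = -∑ e ∈ range (d + 1), fun i => (p i).coeff e := by
  choose q hq using fun i => dvd_iff_isRoot.mpr (hp i)
  simp only [map_one] at hq
  refine ⟨q, hq, fun d => ?_⟩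
  ext i
  simp [coeff_eq_neg_sum_range_of_eq_X_sub_one_mul (hq i)]

theorem Polynomial.eval_one_mem_of_forall_coeff_mem {A ι : Type*} [CommRing A] [Fintype ι]
    {S : AddSubmonoid (ι → A)} {p : ι → A[X]} (hp : ∀ d, (fun i => (p i).coeff d) ∈ S) :
    (fun i => eval 1 (p i)) ∈ S := by
  set N := univ.sup (fun i => (p i).natDegree) + 1
  have hN : ∀ i, (p i).natDegree < N := fun i =>
    Nat.lt_succ_of_le (le_sup (f := fun i => (p i).natDegree) (mem_univ i))
  have hsum : (fun i => eval 1 (p i)) = ∑ e ∈ range N, fun i => (p i).coeff e := by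
    funext i
    simp [eval_eq_sum_range' (hN i)]
  exact hsum ▸ sum_mem fun e _ => hp e

section Filtration

variable {R A : Type*} [Ring R] [AddCommGroup A] [Module R A] {F : ℕ → Submodule R A}

theorem exists_forall_mem_of_exhaustive {ι : Type*} [Fintype ι] (hF : Monotone F)
    (hexh : ∀ a : A, ∃ d, a ∈ F d) (m : ι → A) : ∃ D, ∀ i, m i ∈ F D := by
  choose f hf using fun i => hexh (m i)
  exact ⟨univ.sup f, fun i => hF (le_sup (mem_univ i)) (hf i)⟩

theorem neg_sum_range_mem_of_monotone (hF : Monotone F) {a : ℕ → A} (ha : ∀ e, a e ∈ F e)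
    (d : ℕ) : -∑ e ∈ range (d + 1), a e ∈ F d :=
  neg_mem <| sum_mem fun e he => hF (Nat.lt_succ_iff.mp (mem_range.mp he)) (ha e)

end Filtration

theorem stmt_11_general {R A : Type*} [CommRing R] [CommRing A] [Algebra R A]
    (F : ℕ → Submodule R A) (hmono : ∀ d, F d ≤ F (d + 1))
    (hexh : ∀ a : A, ∃ d, a ∈ F d)
    (s : ℕ) (M : Submodule A (Fin s → A)) :
    let hM : Set (Fin s → Polynomial A) :=
      {p | ∀ d, ((fun i => (p i).coeff d) : Fin s → A) ∈ M ∧ ∀ i, (p i).coeff d ∈ F d}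
    (∀ p ∈ hM, ((fun i => Polynomial.eval 1 (p i)) : Fin s → A) ∈ M) ∧
    (∀ m ∈ M, ∃ p ∈ hM, ∀ i, Polynomial.eval 1 (p i) = m i) ∧
    (∀ p ∈ hM, ((∀ i, Polynomial.eval 1 (p i) = 0) ↔
      ∃ q ∈ hM, ∀ i, p i = (Polynomial.X - 1) * q i)) := by
  intro hM
  have hF : Monotone F := monotone_nat_of_le_succ hmono
  refine ⟨fun p hp => eval_one_mem_of_forall_coeff_mem (S := M.toAddSubmonoid) fun d => (hp d).1,
    fun m hm => ?_, fun p hp => ⟨fun h0 => ?_, ?_⟩⟩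
  · obtain ⟨D, hD⟩ := exists_forall_mem_of_exhaustive hF hexh m
    refine ⟨fun i => C (m i) * X ^ D, fun d => ?_, fun i => by simp⟩
    simp only [coeff_C_mul_X_pow]
    split_ifs with hd
    · exact ⟨hm, hd ▸ hD⟩
    · exact ⟨M.zero_mem, fun _ => zero_mem _⟩
  · obtain ⟨q, hpq, hq⟩ := exists_eq_X_sub_one_mul_of_eval_one_eq_zero h0
    refine ⟨q, fun d => ⟨hq d ▸ neg_mem (sum_mem fun e _ => (hp e).1), fun i => ?_⟩, hpq⟩
    simpa [coeff_eq_neg_sum_range_of_eq_X_sub_one_mul (hpq i)] using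
      neg_sum_range_mem_of_monotone hF (fun e => (hp e).2 i) d
  · rintro ⟨q, -, hpq⟩ i
    simp [hpq i]

/-- Let `F` be a multiplicative exhaustive filtration of a commutative
`R`-algebra `A`, `M` an `A`-submodule of `Fin s → A` with induced filtration
`M_{≤d} = {m ∈ M | ∀ i, m i ∈ F d}`, and
`^hM = {p : Fin s → A[X] | ∀ d, the tuple of degree-d coefficients lies in M_{≤d}}`.
Then componentwise evaluation at 1 maps `^hM` onto `M`, and its kernel is
`(X − 1) • ^hM`. -/
theorem stmt_11 {R A : Type*} [CommRing R] [CommRing A] [Algebra R A]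
    (F : ℕ → Submodule R A) (h1 : (1 : A) ∈ F 0) (hmono : ∀ d, F d ≤ F (d + 1))
    (hmul : ∀ i j, F i * F j ≤ F (i + j)) (hexh : ∀ a : A, ∃ d, a ∈ F d)
    (s : ℕ) (M : Submodule A (Fin s → A)) :
    let hM : Set (Fin s → Polynomial A) :=
      {p | ∀ d, ((fun i => (p i).coeff d) : Fin s → A) ∈ M ∧ ∀ i, (p i).coeff d ∈ F d}
    (∀ p ∈ hM, ((fun i => Polynomial.eval 1 (p i)) : Fin s → A) ∈ M) ∧
    (∀ m ∈ M, ∃ p ∈ hM, ∀ i, Polynomial.eval 1 (p i) = m i) ∧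
    (∀ p ∈ hM, ((∀ i, Polynomial.eval 1 (p i) = 0) ↔
      ∃ q ∈ hM, ∀ i, p i = (Polynomial.X - 1) * q i)) :=
  stmt_11_general F hmono hexh s M
end

section
/- Let R be a commutative ring, A a commutative R-algebra, and F : ℕ → Submodule R A a multiplicative filtration: 1 ∈ F 0, F monotone, F i * F j ≤ F (i+j). Let s be a natural number and for each pair 1 ≤ j < k ≤ s let I_{jk} be an ideal of A; let S := {g : Fin s → A | g j − g k ∈ I_{jk} for all j < k}. Define ^hI_{jk} := {q ∈ Polynomial A | ∀ d, q.coeff d ∈ I_{jk} ⊓ F d} and ^hS := {p : Fin s → Polynomial A | ∀ d, (fun i => (p i).coeff d) ∈ S and (p i).coeff d ∈ F d for all i}. Then ^hS = {p : Fin s → Polynomial A | (p i).coeff d ∈ F d for all i and d, and p j − p k ∈ ^hI_{jk} for all j < k}; i.e., the homogenization of the quasi-spline module defined by the ideal difference-conditions (I_{jk}) is the module defined inside (^hA)^s by the homogenized ideal difference-conditions (^hI_{jk}). -/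
/-- Let `F` be a multiplicative filtration of a commutative `R`-algebra `A`,
`(I j k)_{j<k}` ideals of `A`, and `S = {g : Fin s → A | ∀ j < k, g j − g k ∈ I j k}`.
With `^hI j k = {q ∈ A[X] | ∀ d, q.coeff d ∈ I j k ⊓ F d}` and
`^hS = {p : Fin s → A[X] | ∀ d, the tuple of degree-d coefficients lies in S and in F d}`,
the homogenization `^hS` equals the set cut out inside `(^hA)^s` by the homogenized ideal
difference-conditions `(^hI j k)_{j<k}`. -/
theorem stmt_13 {R A : Type*} [CommRing R] [CommRing A] [Algebra R A]
    (F : ℕ → Submodule R A) (h1 : (1 : A) ∈ F 0) (hmono : ∀ d, F d ≤ F (d + 1))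
    (hmul : ∀ i j, F i * F j ≤ F (i + j))
    (s : ℕ) (I : Fin s → Fin s → Ideal A) :
    {p : Fin s → Polynomial A |
        ∀ d, ((fun i => (p i).coeff d) : Fin s → A) ∈
              {g : Fin s → A | ∀ j k, j < k → g j - g k ∈ I j k} ∧
          ∀ i, (p i).coeff d ∈ F d} =
      {p : Fin s → Polynomial A |
        (∀ i d, (p i).coeff d ∈ F d) ∧
          ∀ j k, j < k →
            p j - p k ∈ {q : Polynomial A | ∀ d, q.coeff d ∈ I j k ∧ q.coeff d ∈ F d}} := by
  ext p
  simp only [Set.mem_setOf_eq, Polynomial.coeff_sub]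
  constructor
  · intro h
    refine ⟨fun i d => (h d).2 i, fun j k hjk d => ⟨(h d).1 j k hjk, ?_⟩⟩
    exact sub_mem ((h d).2 j) ((h d).2 k)
  · intro h d
    exact ⟨fun j k hjk => (h.2 j k hjk d).1, fun i => h.1 i d⟩
end
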